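/- Let θ̂_ψ = (X^T X + nλI)^{-1} X^T (y − Xa) and θ̃_ψ = (X^T X + nλI)^{-1} X^T (y − Xb) be ridge solutions with shifted targets, where a, b ∈ ℝ^d, λ > 0, and Σ = X^T X/n. Then ‖θ̂_ψ − θ̃_ψ‖²_Σ ≤ ‖a − b‖²_Σ. -/

import Mathlib

/-! With `A = XᵀX` and `μ = nλ`, the difference of the two ridge solutions is
`(A + μ • 1)⁻¹ *ᵥ A *ᵥ (b - a)`, and this ridge shrinkage does not increase the
seminorm `v ↦ v ⬝ᵥ A *ᵥ v`. -/

open Matrix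

namespace Matrix

variable {ι : Type*} [Fintype ι]

theorem IsSymm.dotProduct_mulVec_comm {R : Type*} [CommSemiring R] {A : Matrix ι ι R}
    (hA : A.IsSymm) (v w : ι → R) : v ⬝ᵥ A *ᵥ w = w ⬝ᵥ A *ᵥ v := by
  rw [dotProduct_mulVec, ← mulVec_transpose, hA.eq, dotProduct_comm]

theorem posSemidef_transpose_mul_self {m : Type*} [Fintype m] (X : Matrix m ι ℝ) :
    (Xᵀ * X).PosSemidef := by
  simpa using posSemidef_conjTranspose_mul_self X

namespace PosSemidef

variable {A : Matrix ι ι ℝ}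

/-- Writing `v = s + w`, the hypothesis says `A w = μ s`, so the cross terms of
`v ⬝ᵥ A *ᵥ v` equal `2 μ ‖s‖² ≥ 0`. -/
theorem dotProduct_mulVec_le_of_add_smul_one_mulVec_eq [DecidableEq ι] (hA : A.PosSemidef)
    {μ : ℝ} (hμ : 0 ≤ μ) {s v : ι → ℝ} (h : (A + μ • 1) *ᵥ s = A *ᵥ v) :
    s ⬝ᵥ A *ᵥ s ≤ v ⬝ᵥ A *ᵥ v := by
  set w := v - s
  have hAw : A *ᵥ w = μ • s := by
    rw [mulVec_sub, ← h, add_mulVec, smul_mulVec, one_mulVec, add_sub_cancel_left]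
  have hsymm : w ⬝ᵥ A *ᵥ s = s ⬝ᵥ A *ᵥ w :=
    (isHermitian_iff_isSymm.mp hA.isHermitian).dotProduct_mulVec_comm w s
  have hexpand : v ⬝ᵥ A *ᵥ v = s ⬝ᵥ A *ᵥ s + 2 * μ * (s ⬝ᵥ s) + w ⬝ᵥ A *ᵥ w := by
    rw [(add_sub_cancel s v).symm, mulVec_add, add_dotProduct, dotProduct_add, dotProduct_add,
      hsymm, hAw, dotProduct_smul, smul_eq_mul]
    ring
  have hss : 0 ≤ s ⬝ᵥ s := dotProduct_self_star_nonneg s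
  have hw : 0 ≤ w ⬝ᵥ A *ᵥ w := by simpa using hA.dotProduct_mulVec_nonneg w
  nlinarith

theorem dotProduct_mulVec_inv_add_smul_one_mulVec_le [DecidableEq ι] (hA : A.PosSemidef)
    {μ : ℝ} (hμ : 0 < μ) (v : ι → ℝ) :
    let s := (A + μ • 1)⁻¹ *ᵥ (A *ᵥ v)
    s ⬝ᵥ A *ᵥ s ≤ v ⬝ᵥ A *ᵥ v := by
  have hunit : IsUnit (A + μ • 1) := (PosDef.posSemidef_add hA (PosDef.one.smul hμ)).isUnit
  refine hA.dotProduct_mulVec_le_of_add_smul_one_mulVec_eq hμ.le ?_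
  rw [mulVec_mulVec, mul_nonsing_inv _ ((isUnit_iff_isUnit_det _).mp hunit), one_mulVec]

end PosSemidef

end Matrix

theorem ridge_shift_stability {n d : ℕ} (X : Matrix (Fin n) (Fin d) ℝ)
    (y : Fin n → ℝ) (a b : Fin d → ℝ) (lam : ℝ) (hlam : 0 < lam) :
    let Sig := (n : ℝ)⁻¹ • (Xᵀ * X)
    let M := (Xᵀ * X + (n * lam) • (1 : Matrix (Fin d) (Fin d) ℝ))⁻¹
    let ψhat := M *ᵥ (Xᵀ *ᵥ (y - X *ᵥ a))
    let ψtil := M *ᵥ (Xᵀ *ᵥ (y - X *ᵥ b))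
    (ψhat - ψtil) ⬝ᵥ Sig *ᵥ (ψhat - ψtil) ≤ (a - b) ⬝ᵥ Sig *ᵥ (a - b) := by
  intro Sig M ψhat ψtil
  rcases Nat.eq_zero_or_pos n with rfl | hn
  · -- `Sig = 0⁻¹ • _ = 0`, so both sides vanish.
    simp [Sig]
  have hdiff : ψhat - ψtil = M *ᵥ ((Xᵀ * X) *ᵥ (b - a)) := by
    simp only [ψhat, ψtil, ← mulVec_sub, ← mulVec_mulVec, sub_sub_sub_cancel_left]
  have hswap : (a - b) ⬝ᵥ Sig *ᵥ (a - b) = (b - a) ⬝ᵥ Sig *ᵥ (b - a) := by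
    rw [← neg_sub b a, mulVec_neg, neg_dotProduct, dotProduct_neg, neg_neg]
  rw [hdiff, hswap]
  simp only [Sig, smul_mulVec, dotProduct_smul, smul_eq_mul]
  gcongr
  exact (posSemidef_transpose_mul_self X).dotProduct_mulVec_inv_add_smul_one_mulVec_le
    (by positivity) _
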